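/- Let 𝒫 = ⟨P, ⊴⟩ be a partial order PR, let C ∈ P, S = pre(μ𝒫(C)), and suppose a block B ∈ P is split into B₁ = B ∩ S and B₂ = B \ S, both nonempty. Define ⊴' on the split partition by D ⊴' E iff parent_P(D) ⊴ parent_P(E), and then refine ⊴' by removing pairs (X,Y) with X →∃ E, X ⊴' Y, Y not→∃ μ(E) for some block E. Then the pair (B₁, B₂) is removed, i.e., B₁ and B₂ are not related after relation stabilization: there exists a block E with B₁ →∃ E but B₂ ∩ pre(μ(E)) = ∅. -/

import Mathlib

/-- `P` is a partition of the whole state space. -/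
def IsPartition {α : Type*} (P : Set (Set α)) : Prop :=
  (∀ B ∈ P, B.Nonempty) ∧ (∀ x : α, ∃! B, B ∈ P ∧ x ∈ B)

/-- `Split(P,S)` replaces each block `B` by the nonempty sets among
`B ∩ S` and `B \ S`. -/
def SplitP {α : Type*} (P : Set (Set α)) (S : Set α) : Set (Set α) :=
  {X | ∃ B ∈ P, (X = B ∩ S ∨ X = B \ S) ∧ X.Nonempty}

/-- `pre(T) = {s | ∃ t ∈ T, s → t}`. -/
def preR {α : Type*} (tr : α → α → Prop) (T : Set α) : Set α :=
  {s | ∃ t ∈ T, tr s t}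

/-- `S₁ →∃ S₂` iff some state of `S₁` has a transition into `S₂`. -/
def exE {α : Type*} (tr : α → α → Prop) (S T : Set α) : Prop :=
  ∃ s ∈ S, ∃ t ∈ T, tr s t

/-- `μ𝒫(C) = ⋃ {E ∈ P | C ⊴ E}` for a block `C` of `P`. -/
def muBlk {α : Type*} (P : Set (Set α)) (ord : Set α → Set α → Prop)
    (C : Set α) : Set α :=
  ⋃₀ {E | E ∈ P ∧ ord C E}

theorem IsPartition.eq_of_mem {α : Type*} {P : Set (Set α)} (hP : IsPartition P)
    {X Y : Set α} (hX : X ∈ P) (hY : Y ∈ P) {x : α} (hxX : x ∈ X) (hxY : x ∈ Y) :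
    X = Y :=
  (hP.2 x).unique ⟨hX, hxX⟩ ⟨hY, hxY⟩

theorem preR_mono {α : Type*} (tr : α → α → Prop) {T U : Set α} (h : T ⊆ U) :
    preR tr T ⊆ preR tr U :=
  fun _ ⟨t, ht, hst⟩ => ⟨t, h ht, hst⟩

theorem diff_preR_inter_preR_eq_empty {α : Type*} (tr : α → α → Prop) (B : Set α)
    {T U : Set α} (h : T ⊆ U) : (B \ preR tr U) ∩ preR tr T = ∅ :=
  Set.eq_empty_of_forall_notMem fun _ ⟨⟨_, hxU⟩, hxT⟩ => hxU (preR_mono tr h hxT)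

theorem exists_mem_splitP_of_mem {α : Type*} (P : Set (Set α)) (S : Set α)
    {F : Set α} (hF : F ∈ P) {t : α} (htF : t ∈ F) :
    ∃ E ∈ SplitP P S, t ∈ E ∧ E ⊆ F := by
  by_cases htS : t ∈ S
  · exact ⟨F ∩ S, ⟨F, hF, Or.inl rfl, t, htF, htS⟩, ⟨htF, htS⟩, Set.inter_subset_left⟩
  · exact ⟨F \ S, ⟨F, hF, Or.inr rfl, t, htF, htS⟩, ⟨htF, htS⟩, Set.sdiff_subset⟩

theorem muBlk_subset_of_ord {α : Type*} {P : Set (Set α)} {ord : Set α → Set α → Prop}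
    (htrans : ∀ B ∈ P, ∀ C ∈ P, ∀ D ∈ P, ord B C → ord C D → ord B D)
    {C F : Set α} (hC : C ∈ P) (hF : F ∈ P) (hCF : ord C F) :
    muBlk P ord F ⊆ muBlk P ord C :=
  Set.sUnion_subset_sUnion fun _ ⟨hY, hFY⟩ => ⟨hY, htrans C hC F hF _ hY hCF hFY⟩

def liftOrd {α : Type*} (P : Set (Set α)) (ord : Set α → Set α → Prop)
    (D E : Set α) : Prop :=
  ∃ X ∈ P, ∃ Y ∈ P, D ⊆ X ∧ E ⊆ Y ∧ ord X Y

-- A nonempty `E ⊆ F` is contained in no block but `F`, so `liftOrd` relates `E` only as `F`.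
theorem muBlk_liftOrd_subset {α : Type*} {P : Set (Set α)} (hP : IsPartition P)
    (ord : Set α → Set α → Prop) (Q : Set (Set α))
    {E F : Set α} (hF : F ∈ P) (hEF : E ⊆ F) (hE : E.Nonempty) :
    muBlk Q (liftOrd P ord) E ⊆ muBlk P ord F := by
  rintro u ⟨D, ⟨-, X, hX, Y, hY, hEX, hDY, hXY⟩, huD⟩
  obtain ⟨t, htE⟩ := hE
  have hXF : X = F := hP.eq_of_mem hX hF (hEX htE) (hEF htE)
  exact ⟨Y, ⟨hY, hXF ▸ hXY⟩, hDY huD⟩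

theorem stmt12_general {α : Type*} (tr : α → α → Prop)
    (P : Set (Set α)) (hP : IsPartition P)
    (ord : Set α → Set α → Prop)
    (htrans : ∀ B ∈ P, ∀ C ∈ P, ∀ D ∈ P, ord B C → ord C D → ord B D)
    (C : Set α) (hC : C ∈ P)
    (B : Set α)
    (h1 : (B ∩ preR tr (muBlk P ord C)).Nonempty) :
    let S := preR tr (muBlk P ord C)
    let P' := SplitP P S
    let ord' : Set α → Set α → Prop :=
      fun D E => ∃ X ∈ P, ∃ Y ∈ P, D ⊆ X ∧ E ⊆ Y ∧ ord X Y
    ∃ E ∈ P', exE tr (B ∩ S) E ∧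
      (B \ S) ∩ preR tr (muBlk P' ord' E) = ∅ := by
  intro S P' ord'
  obtain ⟨s, hsB, t, htμ, hst⟩ := h1
  obtain ⟨F, ⟨hF, hCF⟩, htF⟩ := htμ
  obtain ⟨E, hE, htE, hEF⟩ := exists_mem_splitP_of_mem P S hF htF
  refine ⟨E, hE, ⟨s, ⟨hsB, t, ⟨F, ⟨hF, hCF⟩, htF⟩, hst⟩, t, htE, hst⟩, ?_⟩
  exact diff_preR_inter_preR_eq_empty tr B <|
    (muBlk_liftOrd_subset hP ord P' hF hEF ⟨t, htE⟩).trans (muBlk_subset_of_ord htrans hC hF hCF)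

/-- Antisymmetry restoration: if a block `B` of a partial order PR
`⟨P,⊴⟩` is split by `S = pre(μ𝒫(C))` into nonempty `B₁ = B ∩ S` and
`B₂ = B \ S`, then after lifting `⊴` to the split partition there is a block
`E` of the split partition with `B₁ →∃ E` and `B₂ ∩ pre(μ𝒫'(E)) = ∅`, so the
pair `(B₁,B₂)` is removed by relation stabilization. -/
theorem stmt12 {α : Type*} (tr : α → α → Prop)
    (P : Set (Set α)) (hP : IsPartition P)
    (ord : Set α → Set α → Prop)
    (hrefl : ∀ B ∈ P, ord B B)
    (htrans : ∀ B ∈ P, ∀ C ∈ P, ∀ D ∈ P, ord B C → ord C D → ord B D)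
    (hantisym : ∀ B ∈ P, ∀ C ∈ P, ord B C → ord C B → B = C)
    (C : Set α) (hC : C ∈ P)
    (B : Set α) (hB : B ∈ P)
    (h1 : (B ∩ preR tr (muBlk P ord C)).Nonempty)
    (h2 : (B \ preR tr (muBlk P ord C)).Nonempty) :
    let S := preR tr (muBlk P ord C)
    let P' := SplitP P S
    let ord' : Set α → Set α → Prop :=
      fun D E => ∃ X ∈ P, ∃ Y ∈ P, D ⊆ X ∧ E ⊆ Y ∧ ord X Y
    ∃ E ∈ P', exE tr (B ∩ S) E ∧
      (B \ S) ∩ preR tr (muBlk P' ord' E) = ∅ :=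
  stmt12_general tr P hP ord htrans C hC B h1
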